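/- For every α > 1/2, the α-th power of the Jensen-Shannon divergence is not a metric on the open probability simplex 𝒫_n = {(p_1,...,p_n) : p_i > 0, Σ p_i = 1} for any n ≥ 2; specifically, there exist P, Q, R ∈ 𝒫_n with D_JS(P:R)^α > D_JS(P:Q)^α + D_JS(Q:R)^α. -/

import Mathlib

/-!
Near the uniform distribution the Jensen-Shannon divergence is a quadratic form in the
displacement. A pair of coordinates `a, b > 0` contributes `(a + b) g((a - b)/(a + b)) / (4 log 2)`,
where `g x = (1 + x) log (1 + x) + (1 - x) log (1 - x) = ∑ x^(2k+2) / ((k+1)(2k+1))`, so that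
`x² ≤ g x ≤ x² / (1 - x²)`. Tilting the uniform `Q` by `±δ/n` on two coordinates gives `P` and `R`
with `D(P:Q) = D(Q:R) ≤ D(P:R) / (4 (1 - δ²))`; since `4^α > 2` for `α > 1/2`, for small `δ` this
makes `D(P:Q)^α + D(Q:R)^α < D(P:R)^α`.
-/

/-- Jensen-Shannon divergence between multinomial distributions given as positive
probability vectors on `Fin n`. -/
noncomputable def jsd {n : ℕ} (P Q : Fin n → ℝ) : ℝ :=
  ∑ i, (-(P i / 2) * Real.logb 2 ((P i + Q i) / (2 * P i))
        - (Q i / 2) * Real.logb 2 ((P i + Q i) / (2 * Q i)))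

open Real

-- `entropyGap x = 2 (log 2 - H((1 + x)/2))`, `H` the binary entropy in nats.
noncomputable def entropyGap (x : ℝ) : ℝ := (1 + x) * log (1 + x) + (1 - x) * log (1 - x)

theorem hasSum_entropyGap {x : ℝ} (hx : |x| < 1) :
    HasSum (fun k : ℕ => (x ^ 2) ^ (k + 1) / ((k + 1) * (2 * k + 1))) (entropyGap x) := by
  have hx2 : |x ^ 2| < 1 := by rwa [abs_pow, sq_abs, sq_lt_one_iff_abs_lt_one]
  obtain ⟨hxl, hxr⟩ := abs_lt.mp hx
  have hgap : entropyGap x = x * (log (1 + x) - log (1 - x)) - -log (1 - x ^ 2) := by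
    rw [entropyGap, show 1 - x ^ 2 = (1 + x) * (1 - x) by ring, log_mul (by linarith) (by linarith)]
    ring
  rw [hgap]
  refine ((hasSum_log_sub_log_of_abs_lt_one hx).mul_left x).sub
    (hasSum_pow_div_log_of_abs_lt_one hx2) |>.congr_fun fun k => ?_
  field_simp
  ring

theorem sq_le_entropyGap {x : ℝ} (hx : |x| < 1) : x ^ 2 ≤ entropyGap x := by
  simpa using le_hasSum (hasSum_entropyGap hx) 0 (fun k _ => by positivity)

theorem entropyGap_le {x : ℝ} (hx : |x| < 1) : entropyGap x ≤ x ^ 2 / (1 - x ^ 2) := by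
  have hx2 : x ^ 2 < 1 := by rwa [sq_lt_one_iff_abs_lt_one]
  have hgeom := (hasSum_geometric_of_lt_one (sq_nonneg x) hx2).mul_left (x ^ 2)
  refine hasSum_le (fun k => ?_) (hasSum_entropyGap hx)
    (by simpa [← pow_succ', div_eq_mul_inv] using hgeom)
  exact div_le_self (by positivity) (by nlinarith [(k.cast_nonneg : (0:ℝ) ≤ k)])

noncomputable def jsdTerm (a b : ℝ) : ℝ :=
  -(a / 2) * logb 2 ((a + b) / (2 * a)) - (b / 2) * logb 2 ((a + b) / (2 * b))

theorem jsd_eq_sum_jsdTerm {n : ℕ} (P Q : Fin n → ℝ) : jsd P Q = ∑ i, jsdTerm (P i) (Q i) := rfl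

theorem jsdTerm_comm (a b : ℝ) : jsdTerm a b = jsdTerm b a := by
  rw [jsdTerm, jsdTerm, add_comm b]; ring

theorem jsdTerm_self (a : ℝ) : jsdTerm a a = 0 := by
  rcases eq_or_ne a 0 with rfl | ha
  · simp [jsdTerm]
  · simp [jsdTerm, ← two_mul, ha]

theorem jsdTerm_div (a b : ℝ) {c : ℝ} (hc : c ≠ 0) : jsdTerm (a / c) (b / c) = jsdTerm a b / c := by
  simp only [jsdTerm, ← add_div, ← mul_div_assoc, div_div_div_cancel_right₀ hc]
  ring

theorem jsd_comm {n : ℕ} (P Q : Fin n → ℝ) : jsd P Q = jsd Q P := by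
  simp only [jsd_eq_sum_jsdTerm, jsdTerm_comm (P _)]

theorem four_log_two_mul_jsdTerm {a b : ℝ} (ha : 0 < a) (hb : 0 < b) :
    4 * log 2 * jsdTerm a b = (a + b) * entropyGap ((a - b) / (a + b)) := by
  have hab : 0 < a + b := by linarith
  have h1 : 1 + (a - b) / (a + b) = (2 * a / (a + b)) := by field_simp; ring
  have h2 : 1 - (a - b) / (a + b) = (2 * b / (a + b)) := by field_simp; ring
  rw [entropyGap, h1, h2, jsdTerm, logb, logb, ← inv_div (2 * a), ← inv_div (2 * b), log_inv,
    log_inv]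
  field_simp
  ring

theorem abs_sub_div_add_lt_one {a b : ℝ} (ha : 0 < a) (hb : 0 < b) : |(a - b) / (a + b)| < 1 := by
  rw [abs_div, abs_of_pos (add_pos ha hb), div_lt_one (add_pos ha hb), abs_sub_lt_iff]
  constructor <;> linarith

theorem sq_sub_div_add_le_four_log_two_mul_jsdTerm {a b : ℝ} (ha : 0 < a) (hb : 0 < b) :
    (a - b) ^ 2 / (a + b) ≤ 4 * log 2 * jsdTerm a b := by
  rw [four_log_two_mul_jsdTerm ha hb]
  calc (a - b) ^ 2 / (a + b) = (a + b) * ((a - b) / (a + b)) ^ 2 := by field_simp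
    _ ≤ _ := by gcongr; exact sq_le_entropyGap (abs_sub_div_add_lt_one ha hb)

theorem four_log_two_mul_jsdTerm_le {a b : ℝ} (ha : 0 < a) (hb : 0 < b) :
    4 * log 2 * jsdTerm a b ≤ (a - b) ^ 2 * (a + b) / (4 * a * b) := by
  rw [four_log_two_mul_jsdTerm ha hb]
  have hab : 0 < a + b := by linarith
  calc (a + b) * entropyGap ((a - b) / (a + b))
      ≤ (a + b) * (((a - b) / (a + b)) ^ 2 / (1 - ((a - b) / (a + b)) ^ 2)) := by
        gcongr; exact entropyGap_le (abs_sub_div_add_lt_one ha hb)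
    _ = _ := by
        rw [show 1 - ((a - b) / (a + b)) ^ 2 = 4 * a * b / (a + b) ^ 2 by field_simp; ring]
        field_simp

theorem jsdTerm_nonneg {a b : ℝ} (ha : 0 < a) (hb : 0 < b) : 0 ≤ jsdTerm a b :=
  nonneg_of_mul_nonneg_right
    ((by positivity : 0 ≤ (a - b) ^ 2 / (a + b)).trans
      (sq_sub_div_add_le_four_log_two_mul_jsdTerm ha hb))
    (by positivity)

theorem jsdTerm_midpoint_lt {δ c : ℝ} (hδ0 : 0 < δ) (hδ1 : δ < 1) (hc : 1 < 4 * c * (1 - δ ^ 2)) :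
    jsdTerm (1 + δ) 1 + jsdTerm (1 - δ) 1 <
      c * (jsdTerm (1 + δ) (1 - δ) + jsdTerm (1 - δ) (1 + δ)) := by
  have h₁ : 0 < 1 - δ := by linarith
  have h₂ : 0 < 1 + δ := by linarith
  have hδ2 : 0 < 1 - δ ^ 2 := by nlinarith
  have hc0 : 0 < c := by nlinarith
  have hmid : 4 * log 2 * (jsdTerm (1 + δ) 1 + jsdTerm (1 - δ) 1) ≤ δ ^ 2 / (1 - δ ^ 2) := by
    have e₁ : 4 * log 2 * jsdTerm (1 + δ) 1 ≤ δ ^ 2 * (2 + δ) / (4 * (1 + δ)) :=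
      (four_log_two_mul_jsdTerm_le h₂ one_pos).trans_eq (by ring)
    have e₂ : 4 * log 2 * jsdTerm (1 - δ) 1 ≤ δ ^ 2 * (2 - δ) / (4 * (1 - δ)) :=
      (four_log_two_mul_jsdTerm_le h₁ one_pos).trans_eq (by ring)
    calc _ ≤ δ ^ 2 * (2 + δ) / (4 * (1 + δ)) + δ ^ 2 * (2 - δ) / (4 * (1 - δ)) := by
          rw [mul_add]; exact add_le_add e₁ e₂
      _ ≤ δ ^ 2 / (1 - δ ^ 2) := by
          rw [div_add_div _ _ (by positivity) (by positivity), div_le_div_iff₀ (by positivity) hδ2]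
          nlinarith [pow_pos hδ0 4]
  have hend : 4 * δ ^ 2 ≤ 4 * log 2 * (jsdTerm (1 + δ) (1 - δ) + jsdTerm (1 - δ) (1 + δ)) := by
    have e₁ := sq_sub_div_add_le_four_log_two_mul_jsdTerm h₂ h₁
    have e₂ := sq_sub_div_add_le_four_log_two_mul_jsdTerm h₁ h₂
    calc 4 * δ ^ 2 = (1 + δ - (1 - δ)) ^ 2 / (1 + δ + (1 - δ))
          + (1 - δ - (1 + δ)) ^ 2 / (1 - δ + (1 + δ)) := by ring
      _ ≤ _ := by rw [mul_add]; exact add_le_add e₁ e₂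
  have hlog : 0 < 4 * log 2 := by positivity
  refine lt_of_mul_lt_mul_left ?_ hlog.le
  calc _ ≤ δ ^ 2 / (1 - δ ^ 2) := hmid
    _ < c * (4 * δ ^ 2) := by rw [div_lt_iff₀ hδ2]; nlinarith [pow_pos hδ0 2]
    _ ≤ _ := by linarith [mul_le_mul_of_nonneg_left hend hc0.le]

noncomputable def tilt {n : ℕ} (i j : Fin n) (t : ℝ) (k : Fin n) : ℝ :=
  (if k = i then 1 + t else if k = j then 1 - t else 1) / n

section tilt

variable {n : ℕ} {i j : Fin n}

theorem tilt_pos {t : ℝ} (ht : |t| < 1) (k : Fin n) : 0 < tilt i j t k := by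
  have hn : (0 : ℝ) < n := Nat.cast_pos.mpr i.pos
  obtain ⟨h₁, h₂⟩ := abs_lt.mp ht
  unfold tilt
  split_ifs <;> apply div_pos _ hn <;> linarith

theorem tilt_of_ne {t : ℝ} {k : Fin n} (hi : k ≠ i) (hj : k ≠ j) : tilt i j t k = 1 / n := by
  simp [tilt, hi, hj]

theorem sum_tilt (hij : i ≠ j) (t : ℝ) : ∑ k, tilt i j t k = 1 := by
  have hn : (n : ℝ) ≠ 0 := Nat.cast_ne_zero.mpr i.pos.ne'
  have hdev : ∑ k, (tilt i j t k - 1 / n) = 0 := by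
    rw [Fintype.sum_eq_add i j hij fun k hk => by rw [tilt_of_ne hk.1 hk.2, sub_self]]
    simp only [tilt, ↓reduceIte, one_div, hij.symm]
    ring
  rw [Finset.sum_sub_distrib, sub_eq_zero] at hdev
  simp [hdev, hn]

theorem jsd_tilt (hij : i ≠ j) (s t : ℝ) :
    jsd (tilt i j s) (tilt i j t) = (jsdTerm (1 + s) (1 + t) + jsdTerm (1 - s) (1 - t)) / n := by
  have hn : (n : ℝ) ≠ 0 := Nat.cast_ne_zero.mpr i.pos.ne'
  rw [jsd_eq_sum_jsdTerm, Fintype.sum_eq_add i j hij fun k hk => by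
    rw [tilt_of_ne hk.1 hk.2, tilt_of_ne hk.1 hk.2, jsdTerm_self]]
  simp only [tilt, if_true, if_neg hij.symm, jsdTerm_div _ _ hn]
  rw [add_div]

end tilt

theorem jsd_nonneg {n : ℕ} {P Q : Fin n → ℝ} (hP : ∀ i, 0 < P i) (hQ : ∀ i, 0 < Q i) :
    0 ≤ jsd P Q :=
  Finset.sum_nonneg fun i _ => jsdTerm_nonneg (hP i) (hQ i)

theorem quarter_lt_two_rpow_neg_inv {α : ℝ} (hα : 1 / 2 < α) : 1 / 4 < (2 : ℝ) ^ (-α⁻¹) := by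
  have hα' : α⁻¹ < 2 := by
    rw [inv_lt_comm₀ (by linarith) two_pos]; linarith
  calc (1 / 4 : ℝ) = 2 ^ (-2 : ℝ) := by norm_num
    _ < 2 ^ (-α⁻¹) := rpow_lt_rpow_of_exponent_lt one_lt_two (by linarith)

theorem two_mul_rpow_lt_rpow {a b α : ℝ} (hb : 0 ≤ b) (hα : 0 < α) (h : b < 2 ^ (-α⁻¹) * a) :
    2 * b ^ α < a ^ α := by
  have hc : (0 : ℝ) < 2 ^ (-α⁻¹) := by positivity
  have ha : 0 < a := pos_of_mul_pos_right (hb.trans_lt h) hc.le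
  have hcα : ((2 : ℝ) ^ (-α⁻¹)) ^ α = 1 / 2 := by
    rw [← rpow_mul zero_le_two, neg_mul, inv_mul_cancel₀ hα.ne', rpow_neg_one, one_div]
  calc 2 * b ^ α < 2 * (2 ^ (-α⁻¹) * a) ^ α := by gcongr
    _ = a ^ α := by rw [mul_rpow hc.le ha.le, hcα]; ring

theorem exists_jsdTerm_midpoint_lt {c : ℝ} (hc : 1 / 4 < c) : ∃ δ : ℝ, 0 < δ ∧ δ < 1 ∧
    jsdTerm (1 + δ) 1 + jsdTerm (1 - δ) 1 <
      c * (jsdTerm (1 + δ) (1 - δ) + jsdTerm (1 - δ) (1 + δ)) := by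
  have hε : 0 < 1 / (4 * c) := by positivity
  have hε1 : 1 / (4 * c) < 1 := by rw [div_lt_one (by linarith)]; linarith
  have hcε : 4 * c * (1 / (4 * c)) = 1 := by field_simp
  refine ⟨(1 - 1 / (4 * c)) / 2, by linarith, by linarith,
    jsdTerm_midpoint_lt (by linarith) (by linarith) ?_⟩
  nlinarith

theorem jsd_pow_not_metric (n : ℕ) (hn : 2 ≤ n) (α : ℝ) (hα : 1 / 2 < α) :
    ∃ P Q R : Fin n → ℝ,
      (∀ i, 0 < P i) ∧ (∑ i, P i) = 1 ∧
      (∀ i, 0 < Q i) ∧ (∑ i, Q i) = 1 ∧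
      (∀ i, 0 < R i) ∧ (∑ i, R i) = 1 ∧
      jsd P R ^ α > jsd P Q ^ α + jsd Q R ^ α := by
  obtain ⟨δ, hδ0, hδ1, hmid⟩ := exists_jsdTerm_midpoint_lt (quarter_lt_two_rpow_neg_inv hα)
  have hδ : |δ| < 1 := by rwa [abs_of_pos hδ0]
  let i : Fin n := ⟨0, by omega⟩
  let j : Fin n := ⟨1, by omega⟩
  have hij : i ≠ j := by simp [i, j, Fin.ext_iff]
  have hP := tilt_pos (i := i) (j := j) hδ
  have hQ := tilt_pos (i := i) (j := j) (t := 0) (by simp)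
  have hR := tilt_pos (i := i) (j := j) (t := -δ) (by rwa [abs_neg])
  refine ⟨_, _, _, hP, sum_tilt hij δ, hQ, sum_tilt hij 0, hR, sum_tilt hij (-δ), ?_⟩
  have hPQ : jsd (tilt i j 0) (tilt i j (-δ)) = jsd (tilt i j δ) (tilt i j 0) := by
    rw [jsd_comm (tilt i j 0), jsd_tilt hij, jsd_tilt hij]
    simp only [add_zero, sub_zero, ← sub_eq_add_neg, sub_neg_eq_add]
    ring
  rw [hPQ, gt_iff_lt, ← two_mul]
  refine two_mul_rpow_lt_rpow (jsd_nonneg hP hQ) (by linarith) ?_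
  rw [jsd_tilt hij, jsd_tilt hij, ← mul_div_assoc]
  gcongr
  simpa [← sub_eq_add_neg] using hmid
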